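/- arXiv:0904.1481 — 3 statements merged into one kernel-verified Lean document; each statement's English description precedes it below -/
import Mathlib

section
/- Let g be the signed coarsening sum g(m₁,…,m_n) = ∑ (-1)^{n-l} L!/(i₁!⋯i_l!) over all coarsenings of (m₁,…,m_n). For 1 ≤ a ≤ t−1 and any composition π of L−t, one has g(1^t,π) = ∑_{s=0}^{a} (-1)^{s+a} (L!/(s!(L−s)!))·g^{(s)}(a+1−s, 1^{t-a-1}, π), where g^{(s)} is the analogous function for compositions of L−s. -/
/-- All coarsenings of a composition: the compositions obtained from it by
successively merging adjacent parts. -/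
def coarsenings : List ℕ → List (List ℕ)
  | [] => [[]]
  | [a] => [[a]]
  | a :: b :: t => ((coarsenings (b :: t)).map (a :: ·)) ++ coarsenings ((a + b) :: t)
termination_by m => m.length
decreasing_by all_goals simp

/-- The multinomial coefficient `L! / (i₁! ⋯ i_l!)`. -/
def mult (L : ℕ) (i : List ℕ) : ℤ :=
  ((Nat.factorial L / (i.map Nat.factorial).prod : ℕ) : ℤ)

/-- The signed coarsening sum
`g(m) = ∑ (-1)^(n-l) · L!/(i₁!⋯i_l!)` over all coarsenings `(i₁,…,i_l)` of `m`. -/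
def g (L : ℕ) (m : List ℕ) : ℤ :=
  ((coarsenings m).map (fun i => (-1 : ℤ) ^ (m.length - i.length) * mult L i)).sum

/-!
Splitting off the first part of a composition of `L` gives the recurrence
`g(x, y, m) = C(L, x) · g^{(x)}(y, m) - g(x + y, m)`: a coarsening either keeps `x` as a part,
which factors its multinomial coefficient, or merges `x` into the next part, which flips the sign.
Peeling the ones of `1^t` off one at a time with this recurrence, the new terms involving
`g^{(a+1)}(1, …)` collapse, via `C(L, s) C(L - s, a + 1 - s) = C(L, a + 1) C(a + 1, s)` and the
alternating binomial sum, into the single term `s = a + 1` of the next expansion.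
-/

open Finset

theorem sum_of_mem_coarsenings {m i : List ℕ} (hi : i ∈ coarsenings m) : i.sum = m.sum := by
  induction m using coarsenings.induct generalizing i with
  | case1 | case2 => simp_all [coarsenings]
  | case3 a b t ih₁ ih₂ =>
    rw [coarsenings] at hi
    grind

theorem length_le_of_mem_coarsenings {m i : List ℕ} (hi : i ∈ coarsenings m) :
    i.length ≤ m.length := by
  induction m using coarsenings.induct generalizing i with
  | case1 | case2 => simp_all [coarsenings]
  | case3 a b t ih₁ ih₂ =>
    rw [coarsenings] at hi
    grind

theorem prod_map_factorial_dvd_factorial_sum (l : List ℕ) :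
    (l.map Nat.factorial).prod ∣ l.sum.factorial := by
  induction l with
  | nil => simp
  | cons x l ih =>
    rw [List.map_cons, List.prod_cons, List.sum_cons]
    exact (mul_dvd_mul_left _ ih).trans (Nat.factorial_mul_factorial_dvd_factorial_add _ _)

theorem mult_cons {L x : ℕ} {i : List ℕ} (h : x + i.sum = L) :
    mult L (x :: i) = L.choose x * mult (L - x) i := by
  subst h
  have hfact :
      (x + i.sum).factorial = x.factorial * ((x + i.sum).choose x * i.sum.factorial) := by
    rw [Nat.add_comm x, ← Nat.add_choose_mul_factorial_mul_factorial]; ring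
  have hpos : 0 < x.factorial := Nat.factorial_pos x
  simp only [mult, List.map_cons, List.prod_cons, Nat.add_sub_cancel_left, hfact,
    Nat.mul_div_mul_left _ _ hpos, Nat.mul_div_assoc _ (prod_map_factorial_dvd_factorial_sum i)]
  push_cast; rfl

theorem g_cons_cons {L x y : ℕ} {t : List ℕ} (hL : x + (y :: t).sum = L) :
    g L (x :: y :: t) = L.choose x * g (L - x) (y :: t) - g L ((x + y) :: t) := by
  rw [g, coarsenings, List.map_append, List.sum_append, List.map_map, g,
    ← List.sum_map_mul_left, g, sub_eq_add_neg, List.sum_neg, List.map_map]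
  congr 2
  · refine List.map_congr_left fun i hi => ?_
    rw [Function.comp_apply, mult_cons (by rw [sum_of_mem_coarsenings hi, hL])]
    simp only [List.length_cons, Nat.add_sub_add_right]
    ring
  · refine List.map_congr_left fun i hi => ?_
    have hlen := length_le_of_mem_coarsenings hi
    simp only [List.length_cons, Function.comp_apply] at hlen ⊢
    rw [show t.length + 1 + 1 - i.length = t.length + 1 - i.length + 1 by omega, pow_succ]
    ring

theorem sum_neg_one_pow_mul_choose_mul_choose (L a : ℕ) :
    ∑ s ∈ range (a + 1), (-1 : ℤ) ^ (s + a) * L.choose s * (L - s).choose (a + 1 - s)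
      = L.choose (a + 1) := by
  have hsplit : ∀ s ∈ range (a + 1),
      (-1 : ℤ) ^ (s + a) * L.choose s * (L - s).choose (a + 1 - s)
        = (-1) ^ a * L.choose (a + 1) * ((-1) ^ s * (a + 1).choose s) := by
    intro s hs
    have := Nat.choose_mul (n := L) (Nat.le_succ_of_le (mem_range_succ_iff.1 hs))
    rw [pow_add, mul_assoc _ (L.choose s : ℤ), ← Nat.cast_mul, ← this]
    push_cast
    ring
  rw [sum_congr rfl hsplit, ← mul_sum, Int.alternating_sum_range_choose_eq_choose,
    Nat.choose_self, Nat.cast_one, mul_one, mul_right_comm, ← pow_add, ← two_mul, pow_mul]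
  simp

theorem g_replicate_one_append (a : ℕ) {L : ℕ} {Q : List ℕ} (hL : a + 1 + Q.sum = L) :
    g L (List.replicate (a + 1) 1 ++ Q)
      = ∑ s ∈ range (a + 1),
          (-1 : ℤ) ^ (s + a) * L.choose s * g (L - s) ((a + 1 - s) :: Q) := by
  induction a generalizing Q with
  | zero => simp
  | succ a ih =>
    have hstep : ∀ s ∈ range (a + 1), g (L - s) ((a + 1 - s) :: 1 :: Q)
        = (L - s).choose (a + 1 - s) * g (L - (a + 1)) (1 :: Q)
          - g (L - s) ((a + 1 + 1 - s) :: Q) := by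
      intro s hs
      have hsa : s ≤ a := mem_range_succ_iff.1 hs
      rw [g_cons_cons (by simp; omega), show L - s - (a + 1 - s) = L - (a + 1) by omega,
        show a + 1 - s + 1 = a + 1 + 1 - s by omega]
    calc g L (List.replicate (a + 1 + 1) 1 ++ Q)
        = g L (List.replicate (a + 1) 1 ++ 1 :: Q) := by
          rw [List.replicate_succ', List.append_assoc, List.singleton_append]
      _ = ∑ s ∈ range (a + 1),
            (-1 : ℤ) ^ (s + a) * L.choose s * g (L - s) ((a + 1 - s) :: 1 :: Q) :=
          ih (by simp; omega)
      _ = L.choose (a + 1) * g (L - (a + 1)) (1 :: Q) + ∑ s ∈ range (a + 1),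
            (-1 : ℤ) ^ (s + (a + 1)) * L.choose s * g (L - s) ((a + 1 + 1 - s) :: Q) := by
          rw [← sum_neg_one_pow_mul_choose_mul_choose L a, sum_mul, ← sum_add_distrib]
          refine sum_congr rfl fun s hs => ?_
          rw [hstep s hs]
          ring
      _ = _ := by
          rw [sum_range_succ _ (a + 1), add_comm, Nat.add_sub_cancel_left,
            Even.neg_one_pow ⟨a + 1, rfl⟩, one_mul]

theorem g_expansion_general (L a t : ℕ) (π : List ℕ)
    (hat : a ≤ t - 1) (ht : 1 ≤ t) (hsum : t + π.sum = L) :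
    g L (List.replicate t 1 ++ π)
      = ∑ s ∈ Finset.range (a + 1),
          (-1 : ℤ) ^ (s + a) * (L.choose s : ℤ)
            * g (L - s) ((a + 1 - s) :: (List.replicate (t - a - 1) 1 ++ π)) := by
  obtain ⟨k, rfl⟩ : ∃ k, t = a + 1 + k := ⟨t - (a + 1), by omega⟩
  rw [show a + 1 + k - a - 1 = k by omega, List.replicate_add, List.append_assoc]
  exact g_replicate_one_append a (by simp; omega)

/-- For `1 ≤ a ≤ t−1` and any composition `π` of `L−t`:
`g(1^t,π) = ∑_{s=0}^{a} (-1)^{s+a} (L!/(s!(L−s)!)) · g^{(s)}(a+1−s, 1^{t-a-1}, π)`,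
where `g^{(s)}` is the analogous signed coarsening sum for compositions of `L−s`. -/
theorem g_expansion (L a t : ℕ) (π : List ℕ)
    (ha : 1 ≤ a) (hat : a ≤ t - 1) (ht : 1 ≤ t)
    (hπ : ∀ x ∈ π, 1 ≤ x) (hsum : t + π.sum = L) :
    g L (List.replicate t 1 ++ π)
      = ∑ s ∈ Finset.range (a + 1),
          (-1 : ℤ) ^ (s + a) * (L.choose s : ℤ)
            * g (L - s) ((a + 1 - s) :: (List.replicate (t - a - 1) 1 ++ π)) :=
  g_expansion_general L a t π hat ht hsum
end

section
/- Spectral inclusion: for sectors s ⊂ t ⊆ {1,…,L−1}, every eigenvalue of H_s (with its multiplicity in the characteristic polynomial) is an eigenvalue of H_t; equivalently, the characteristic polynomial of H_s divides that of H_t. -/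
/-! Merging species relabels each configuration of sector `t` as one of sector `s`; this map `φ`
is surjective (a permutation of the `s`-word lifts to the same permutation of the `t`-word) and
commutes with every local swap. Merging is monotone on species, so it preserves the sign of
`k_i − k_{i+1}`, hence the rate `Θ`, unless it makes the two species equal, and then the merged
swap is trivial. Thus `φ H_t = H_s φ`. A section of `φ` splits `V_t = V_s ⊕ W`, in which
`φ = [1 U]`; conjugating `H_t` by `[[1, U], [0, 1]]` makes it block lower triangular with diagonal
blocks `H_s` and some `H'`, so `χ(H_t) = χ(H_s) χ(H')`. -/

/-- The hopping rate `Θ(x) = p` for `x > 0`, `0` for `x = 0`, `q` for `x < 0`. -/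
noncomputable def theta (p q : ℝ) (x : ℤ) : ℝ := if 0 < x then p else if x < 0 then q else 0

/-- Cyclic successor on `Fin L`. -/
def cycSucc {L : ℕ} (i : Fin L) : Fin L := ⟨((i : ℕ) + 1) % L, Nat.mod_lt _ i.pos⟩

/-- The configuration obtained from `k` by interchanging the local states at
sites `i` and `i+1` (cyclically). -/
def swapAt {L N : ℕ} (k : Fin L → Fin N) (i : Fin L) : Fin L → Fin N :=
  fun j => if j = i then k (cycSucc i) else if j = cycSucc i then k i else k j

/-- The species of the `u`-th letter (`1 ≤ u ≤ L`) of the nondecreasing word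
`1^{s₁} 2^{s₂−s₁} ⋯ n^{L−s_{n−1}}` determined by the sector `s = {s₁<…<s_{n−1}}`. -/
def spc (s : Finset ℕ) (u : ℕ) : ℕ := 1 + (s.filter (· < u)).card

/-- A configuration lies in the sector labeled by `s ⊆ {1,…,L−1}` iff it is a
permutation of the word `1^{s₁} 2^{s₂−s₁} ⋯ n^{L−s_{n−1}}`. -/
def inSector (L : ℕ) (s : Finset ℕ) (k : Fin L → Fin (L + 1)) : Prop :=
  Multiset.map (fun j => (k j : ℕ)) Finset.univ.val
    = Multiset.map (spc s) (Finset.Icc 1 L).val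

instance (L : ℕ) (s : Finset ℕ) : DecidablePred (inSector L s) :=
  fun _ => inferInstanceAs (Decidable (_ = _))

/-- The set of basis configurations of the sector `V_s`. -/
abbrev Sector (L : ℕ) (s : Finset ℕ) := {k : Fin L → Fin (L + 1) // inSector L s k}

/-- The monotone merging map on species labels determined by `s ⊆ t`: if
`s = t \ {t_{i₁},…,t_{i_l}}` then `x ↦ x − #{j : i_j < x}`. -/
def mrg (s t : Finset ℕ) (x : ℕ) : ℕ :=
  x - ((t \ s).filter (fun e => (t.filter (· ≤ e)).card < x)).card

/-- The species-merging map `φ_{s,t} : V_t → V_s` as a matrix. -/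
noncomputable def PhiMat (L : ℕ) (s t : Finset ℕ) : Matrix (Sector L s) (Sector L t) ℝ :=
  fun c k => if (fun j => (c.1 j : ℕ)) = (fun j => mrg s t (k.1 j)) then 1 else 0

/-- The multi-species ASEP Hamiltonian restricted to the sector `V_s`:
`H|k⟩ = ∑_i Θ(k_i−k_{i+1}) (|k^{(i)}⟩ − |k⟩)` cyclically. -/
noncomputable def HSec (p q : ℝ) (L : ℕ) (s : Finset ℕ) :
    Matrix (Sector L s) (Sector L s) ℝ :=
  fun c k => ∑ i : Fin L, theta p q ((k.1 i : ℤ) - (k.1 (cycSucc i) : ℤ)) *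
    ((if c.1 = swapAt k.1 i then 1 else 0) - (if c.1 = k.1 then 1 else 0))

open Matrix Finset

section CharpolyDvd

variable {R : Type*} [CommRing R] {n o m : Type*} [Fintype n] [DecidableEq n] [Fintype o]
  [DecidableEq o] [Fintype m] [DecidableEq m]

theorem Matrix.charpoly_dvd_of_fromCols_one_mul_eq {A : Matrix n n R} {U : Matrix n o R}
    {B : Matrix (n ⊕ o) (n ⊕ o) R} (h : fromCols (1 : Matrix n n R) U * B = A * fromCols 1 U) :
    A.charpoly ∣ B.charpoly := by
  obtain ⟨B₁₁, B₁₂, B₂₁, B₂₂, rfl⟩ :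
      ∃ B₁₁ B₁₂ B₂₁ B₂₂, B = fromBlocks B₁₁ B₁₂ B₂₁ B₂₂ :=
    ⟨_, _, _, _, (fromBlocks_toBlocks B).symm⟩
  rw [fromCols_mul_fromBlocks, mul_fromCols, Matrix.mul_one, Matrix.one_mul, Matrix.one_mul,
    fromCols_ext_iff] at h
  obtain ⟨hA, hAU⟩ := h
  set P : Matrix (n ⊕ o) (n ⊕ o) R := fromBlocks 1 U 0 1
  set Q : Matrix (n ⊕ o) (n ⊕ o) R := fromBlocks 1 (-U) 0 1
  have hQP : Q * P = 1 := by simp [P, Q, fromBlocks_multiply, ← fromBlocks_one]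
  have hconj : P * fromBlocks B₁₁ B₁₂ B₂₁ B₂₂ * Q = fromBlocks A 0 B₂₁ (B₂₂ - B₂₁ * U) := by
    simp [P, Q, fromBlocks_multiply, hA, hAU, Matrix.mul_neg, sub_eq_neg_add]
  have hchar : (fromBlocks B₁₁ B₁₂ B₂₁ B₂₂).charpoly = A.charpoly * (B₂₂ - B₂₁ * U).charpoly := by
    rw [← charpoly_fromBlocks_zero₁₂, ← hconj, charpoly_mul_comm, ← mul_assoc, hQP, Matrix.one_mul]
  exact ⟨_, hchar⟩

theorem Matrix.charpoly_dvd_of_mul_eq_mul_of_submatrix_eq_one {A : Matrix n n R} {B : Matrix m m R}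
    {Φ : Matrix n m R} {g : n → m} (hg : Function.Injective g) (hΦg : Φ.submatrix id g = 1)
    (h : Φ * B = A * Φ) : A.charpoly ∣ B.charpoly := by
  classical
  let e : n ⊕ {k // k ∉ Set.range g} ≃ m :=
    (Equiv.sumCongr (Equiv.ofInjective g hg) (Equiv.refl _)).trans
      (Equiv.sumCompl (· ∈ Set.range g))
  have hΦe : Φ.submatrix id e = fromCols 1 (Φ.submatrix id (↑)) := by
    ext a (b | k)
    · exact congrFun (congrFun hΦg a) b
    · rfl
  rw [← charpoly_reindex e.symm]
  apply charpoly_dvd_of_fromCols_one_mul_eq (U := Φ.submatrix id (↑))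
  rw [← hΦe, reindex_apply, Equiv.symm_symm, submatrix_mul_equiv, h]
  rfl

theorem Matrix.charpoly_dvd_of_submatrix_one_mul_eq {A : Matrix n n R} {B : Matrix m m R}
    {f : m → n} (hf : Function.Surjective f)
    (h : (1 : Matrix n n R).submatrix id f * B = A * (1 : Matrix n n R).submatrix id f) :
    A.charpoly ∣ B.charpoly := by
  obtain ⟨g, hg⟩ := hf.hasRightInverse
  refine charpoly_dvd_of_mul_eq_mul_of_submatrix_eq_one hg.injective ?_ h
  rw [submatrix_submatrix, Function.comp_id, hg.comp_eq_id, submatrix_id_id]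

end CharpolyDvd

theorem exists_equiv_of_map_univ_val_eq {α β γ : Type*} [Fintype α] [Fintype β] [DecidableEq γ]
    {f : α → γ} {g : β → γ} (h : univ.val.map f = univ.val.map g) :
    ∃ e : α ≃ β, ∀ a, g (e a) = f a := by
  classical
  have hfiber (c : γ) : Fintype.card {a // f a = c} = Fintype.card {b // g b = c} := by
    simpa [Fintype.card_subtype, Multiset.count_map, card_def, eq_comm]
      using congrArg (Multiset.count c) h
  exact ⟨Equiv.ofFiberEquiv fun c => Fintype.equivOfCardEq (hfiber c), Equiv.ofFiberEquiv_map _⟩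

section Rank

variable {α : Type*} [LinearOrder α] {t : Finset α}

theorem card_filter_le_le_card_filter_lt_iff {e : α} (he : e ∈ t) (u : α) :
    (t.filter (· ≤ e)).card ≤ (t.filter (· < u)).card ↔ e < u := by
  constructor
  · intro hcard
    by_contra! hue
    refine hcard.not_gt (card_lt_card ?_)
    refine (ssubset_iff_of_subset fun x hx => ?_).2 ⟨e, by simp [he], by simp [hue]⟩
    simp only [mem_filter] at hx ⊢
    exact ⟨hx.1, hx.2.le.trans hue⟩
  · intro heu
    exact card_le_card fun x hx => by
      simp only [mem_filter] at hx ⊢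
      exact ⟨hx.1, hx.2.trans_lt heu⟩

theorem strictMonoOn_card_filter_le : StrictMonoOn (fun e => (t.filter (· ≤ e)).card) t :=
  fun _ hx y hy hxy => ((card_filter_le_le_card_filter_lt_iff hx y).2 hxy).trans_lt
    (not_le.1 ((card_filter_le_le_card_filter_lt_iff hy y).not.2 (lt_irrefl y)))

end Rank

section Merge

variable {s t : Finset ℕ}

theorem mrg_spc (hst : s ⊆ t) (u : ℕ) : mrg s t (spc t u) = spc s u := by
  have hfilter : (t \ s).filter (fun e => (t.filter (· ≤ e)).card < spc t u)
      = (t \ s).filter (· < u) :=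
    filter_congr fun e he => by
      rw [spc, Nat.lt_one_add_iff, card_filter_le_le_card_filter_lt_iff (mem_sdiff.1 he).1]
  have hsplit : (t.filter (· < u)).card
      = (s.filter (· < u)).card + ((t \ s).filter (· < u)).card := by
    rw [← card_union_of_disjoint (disjoint_filter_filter disjoint_sdiff), ← filter_union,
      union_sdiff_of_subset hst]
  rw [mrg, hfilter, spc, spc, hsplit]
  omega

theorem mrg_monotone : Monotone (mrg s t) := by
  refine monotone_nat_of_le_succ fun x => ?_
  have hsplit : (t \ s).filter (fun e => (t.filter (· ≤ e)).card < x + 1)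
      ⊆ (t \ s).filter (fun e => (t.filter (· ≤ e)).card < x)
        ∪ (t \ s).filter (fun e => (t.filter (· ≤ e)).card = x) := by
    intro e
    simp only [mem_union, mem_filter]
    rintro ⟨he, hlt⟩
    exact (Nat.lt_succ_iff_lt_or_eq.1 hlt).imp (⟨he, ·⟩) (⟨he, ·⟩)
  have hrank : ((t \ s).filter (fun e => (t.filter (· ≤ e)).card = x)).card ≤ 1 := by
    refine card_le_one.2 fun a ha b hb => (strictMonoOn_card_filter_le (t := t)).injOn ?_ ?_ ?_
    · exact (mem_sdiff.1 (mem_filter.1 ha).1).1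
    · exact (mem_sdiff.1 (mem_filter.1 hb).1).1
    · exact (mem_filter.1 ha).2.trans (mem_filter.1 hb).2.symm
  have hstep := (card_le_card hsplit).trans (card_union_le _ _)
  unfold mrg
  omega

end Merge

def mergeSpecies (s t : Finset ℕ) {N : ℕ} (x : Fin N) : Fin N :=
  ⟨mrg s t x, (Nat.sub_le _ _).trans_lt x.isLt⟩

theorem mergeSpecies_monotone {s t : Finset ℕ} {N : ℕ} :
    Monotone (mergeSpecies s t : Fin N → Fin N) :=
  fun _ _ hxy => Fin.mk_le_mk.2 (mrg_monotone hxy)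

section Swap

variable {L N M : ℕ}

theorem theta_sub_comp_of_monotone (p q : ℝ) {f : Fin N → Fin M} (hf : Monotone f) {a b : Fin N}
    (h : f a ≠ f b) : theta p q ((f a : ℤ) - (f b : ℤ)) = theta p q ((a : ℤ) - (b : ℤ)) := by
  have hab : f a < f b ↔ a < b := ⟨hf.reflect_lt, fun hab => (hf hab.le).lt_of_ne h⟩
  have hba : f b < f a ↔ b < a := ⟨hf.reflect_lt, fun hba => (hf hba.le).lt_of_ne h.symm⟩
  simp only [theta, sub_pos, sub_neg, Nat.cast_lt, Fin.val_fin_lt, hab, hba]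

theorem swapAt_eq_comp_swap (k : Fin L → Fin N) (i : Fin L) :
    swapAt k i = k ∘ Equiv.swap i (cycSucc i) := by
  funext j
  simp only [swapAt, Function.comp_apply, Equiv.swap_apply_def]
  split_ifs <;> rfl

theorem swapAt_comp (f : Fin N → Fin M) (k : Fin L → Fin N) (i : Fin L) :
    swapAt (f ∘ k) i = f ∘ swapAt k i := by
  simp only [swapAt_eq_comp_swap, Function.comp_assoc]

theorem swapAt_eq_self {k : Fin L → Fin N} {i : Fin L} (h : k i = k (cycSucc i)) :
    swapAt k i = k := by
  funext j
  unfold swapAt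
  split_ifs with hj hj'
  · rw [hj, h]
  · rw [hj', h]
  · rfl

theorem theta_mul_sub_comp_swapAt (p q : ℝ) {f : Fin N → Fin M} (hf : Monotone f)
    (k : Fin L → Fin N) (i : Fin L) (c : Fin L → Fin M) :
    theta p q ((k i : ℤ) - (k (cycSucc i) : ℤ)) *
        ((if c = f ∘ swapAt k i then 1 else 0) - (if c = f ∘ k then 1 else 0))
      = theta p q (((f ∘ k) i : ℤ) - ((f ∘ k) (cycSucc i) : ℤ)) *
        ((if c = swapAt (f ∘ k) i then 1 else 0) - (if c = f ∘ k then 1 else 0)) := by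
  rw [← swapAt_comp]
  by_cases hi : (f ∘ k) i = (f ∘ k) (cycSucc i)
  · simp [swapAt_eq_self hi]
  · rw [Function.comp_apply, Function.comp_apply, theta_sub_comp_of_monotone p q hf hi]

end Swap

section Sector

variable {L : ℕ} {s t : Finset ℕ}

theorem inSector_iff_exists_equiv {k : Fin L → Fin (L + 1)} :
    inSector L s k ↔ ∃ e : Fin L ≃ Finset.Icc 1 L, ∀ j, (k j : ℕ) = spc s (e j) := by
  have hIcc : (Finset.Icc 1 L).val.map (spc s)
      = (univ : Finset (Finset.Icc 1 L)).val.map (fun u => spc s u.1) := by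
    rw [univ_eq_attach, attach_val]
    exact (Multiset.attach_map_val' _ _).symm
  rw [inSector, hIcc]
  constructor
  · intro hk
    obtain ⟨e, he⟩ := exists_equiv_of_map_univ_val_eq hk
    exact ⟨e, fun j => (he j).symm⟩
  · rintro ⟨e, he⟩
    rw [← Multiset.map_univ_val_equiv e, Multiset.map_map]
    exact Multiset.map_congr rfl fun j _ => he j

theorem inSector_comp_perm {k : Fin L → Fin (L + 1)} (hk : inSector L s k)
    (σ : Equiv.Perm (Fin L)) : inSector L s (k ∘ σ) := by
  obtain ⟨e, he⟩ := inSector_iff_exists_equiv.1 hk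
  exact inSector_iff_exists_equiv.2 ⟨σ.trans e, fun j => he (σ j)⟩

theorem inSector_swapAt {k : Fin L → Fin (L + 1)} (hk : inSector L s k) (i : Fin L) :
    inSector L s (swapAt k i) := by
  rw [swapAt_eq_comp_swap]
  exact inSector_comp_perm hk _

theorem inSector_mergeSpecies_comp (hst : s ⊆ t) {k : Fin L → Fin (L + 1)}
    (hk : inSector L t k) : inSector L s (mergeSpecies s t ∘ k) := by
  obtain ⟨e, he⟩ := inSector_iff_exists_equiv.1 hk
  exact inSector_iff_exists_equiv.2 ⟨e, fun j => by simp [mergeSpecies, he, mrg_spc hst]⟩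

theorem spc_lt_of_subset_Ioo (ht : t ⊆ Finset.Ioo 0 L) {u : ℕ} (hL : 0 < L) :
    spc t u < L + 1 := by
  have hcard : t.card ≤ L - 1 := by simpa using card_le_card ht
  have := card_le_card (filter_subset (· < u) t)
  unfold spc
  omega

def sectorMerge (hst : s ⊆ t) (k : Sector L t) : Sector L s :=
  ⟨mergeSpecies s t ∘ k.1, inSector_mergeSpecies_comp hst k.2⟩

theorem sectorMerge_surjective (hst : s ⊆ t) (ht : t ⊆ Finset.Ioo 0 L) :
    Function.Surjective (sectorMerge (L := L) hst) := by
  rintro ⟨c, hc⟩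
  obtain ⟨e, he⟩ := inSector_iff_exists_equiv.1 hc
  let k : Fin L → Fin (L + 1) := fun j => ⟨spc t (e j), spc_lt_of_subset_Ioo ht j.pos⟩
  refine ⟨⟨k, inSector_iff_exists_equiv.2 ⟨e, fun _ => rfl⟩⟩, ?_⟩
  ext j
  simp [sectorMerge, mergeSpecies, k, mrg_spc hst, he]

end Sector

section Intertwining

variable {L : ℕ} {s t : Finset ℕ}

theorem PhiMat_eq_submatrix_one (hst : s ⊆ t) :
    PhiMat L s t = (1 : Matrix (Sector L s) (Sector L s) ℝ).submatrix id (sectorMerge hst) := by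
  ext c k
  simp [PhiMat, one_apply, sectorMerge, mergeSpecies, Subtype.ext_iff, funext_iff, Fin.ext_iff]

theorem sum_one_apply_sectorMerge_mul_ite (hst : s ⊆ t) (c : Sector L s) (w : Sector L t) :
    ∑ m : Sector L t, (1 : Matrix (Sector L s) (Sector L s) ℝ) c (sectorMerge hst m) *
        (if m.1 = w.1 then 1 else 0)
      = if c.1 = mergeSpecies s t ∘ w.1 then 1 else 0 := by
  rw [Fintype.sum_eq_single w fun m hm => by simp [Subtype.ext_iff.not.1 hm]]
  simp [one_apply, sectorMerge, Subtype.ext_iff]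

theorem PhiMat_mul_HSec (p q : ℝ) (hst : s ⊆ t) :
    PhiMat L s t * HSec p q L t = HSec p q L s * PhiMat L s t := by
  rw [PhiMat_eq_submatrix_one hst]
  ext c k
  calc ((1 : Matrix (Sector L s) (Sector L s) ℝ).submatrix id (sectorMerge hst) * HSec p q L t :
        Matrix (Sector L s) (Sector L t) ℝ) c k
      = ∑ i : Fin L, theta p q ((k.1 i : ℤ) - (k.1 (cycSucc i) : ℤ)) *
          ((if c.1 = mergeSpecies s t ∘ swapAt k.1 i then 1 else 0)
            - (if c.1 = mergeSpecies s t ∘ k.1 then 1 else 0)) := by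
        simp only [mul_apply, submatrix_apply, HSec, mul_sum]
        rw [sum_comm]
        refine sum_congr rfl fun i _ => ?_
        rw [← sum_one_apply_sectorMerge_mul_ite hst c ⟨_, inSector_swapAt k.2 i⟩,
          ← sum_one_apply_sectorMerge_mul_ite hst c k, ← sum_sub_distrib, mul_sum]
        exact sum_congr rfl fun m _ => by rw [id]; ring
    _ = HSec p q L s c (sectorMerge hst k) :=
        sum_congr rfl fun i _ => theta_mul_sub_comp_swapAt p q mergeSpecies_monotone k.1 i c.1
    _ = (HSec p q L s * (1 : Matrix (Sector L s) (Sector L s) ℝ).submatrix id (sectorMerge hst) :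
        Matrix (Sector L s) (Sector L t) ℝ) c k := by
        simp [mul_apply, one_apply]

end Intertwining

theorem spectral_inclusion_general (p q : ℝ) (L : ℕ)
    (s t : Finset ℕ) (hst : s ⊆ t) (ht : t ⊆ Finset.Ioo 0 L) :
    (HSec p q L s).charpoly ∣ (HSec p q L t).charpoly := by
  refine Matrix.charpoly_dvd_of_submatrix_one_mul_eq (sectorMerge_surjective hst ht) ?_
  rw [← PhiMat_eq_submatrix_one hst]
  exact PhiMat_mul_HSec p q hst

/-- Spectral inclusion: for sectors `s ⊆ t ⊆ {1,…,L−1}`, the characteristic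
polynomial of `H_s` divides that of `H_t`; in particular every eigenvalue of
`H_s`, with multiplicity, is an eigenvalue of `H_t`. -/
theorem spectral_inclusion (p q : ℝ) (hp : 0 ≤ p) (hq : 0 ≤ q) (L : ℕ)
    (s t : Finset ℕ) (hst : s ⊆ t) (ht : t ⊆ Finset.Ioo 0 L) :
    (HSec p q L s).charpoly ∣ (HSec p q L t).charpoly :=
  spectral_inclusion_general p q L s t hst ht
end

section
/- The signed reversed vector is a ground-state partner: in the maximal sector of permutations of (1,…,L), the vector ∑_k sgn(k) |k_L,…,k₁⟩ is an eigenvector of the multi-species ASEP Hamiltonian H with eigenvalue −L(p+q); equivalently, (H + L(p+q)) ∑_{k∈S_L} sgn(k)|k_L,…,k₁⟩ = 0. -/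
/-- The configuration (in the maximal sector of permutations of `(1,…,L)`)
obtained from `k` by interchanging the local states at sites `i` and `i+1`. -/
def swapK {L : ℕ} (k : Equiv.Perm (Fin L)) (i : Fin L) : Equiv.Perm (Fin L) :=
  (Equiv.swap i (cycSucc i)).trans k

/-- The multi-species ASEP Hamiltonian on the maximal sector, as a matrix:
`H|k⟩ = ∑_{i∈ℤ_L} Θ(k_i−k_{i+1}) (|k^{(i)}⟩ − |k⟩)`. -/
noncomputable def HmatMax (p q : ℝ) (L : ℕ) :
    Matrix (Equiv.Perm (Fin L)) (Equiv.Perm (Fin L)) ℝ :=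
  fun c k => ∑ i : Fin L, theta p q ((k i : ℤ) - (k (cycSucc i) : ℤ)) *
    ((if c = swapK k i then 1 else 0) - (if c = k then 1 else 0))

lemma swapK_swapK {L : ℕ} (k : Equiv.Perm (Fin L)) (i : Fin L) :
    swapK (swapK k i) i = k := by
  rw [swapK, swapK, ← Equiv.trans_assoc, Equiv.swap_swap, Equiv.refl_trans]

lemma eq_swapK_iff {L : ℕ} {c k : Equiv.Perm (Fin L)} {i : Fin L} :
    c = swapK k i ↔ k = swapK c i :=
  ⟨fun h => h ▸ (swapK_swapK k i).symm, fun h => h ▸ (swapK_swapK c i).symm⟩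

@[simp]
lemma swapK_apply_self {L : ℕ} (k : Equiv.Perm (Fin L)) (i : Fin L) :
    swapK k i i = k (cycSucc i) := by
  simp [swapK]

@[simp]
lemma swapK_apply_cycSucc {L : ℕ} (k : Equiv.Perm (Fin L)) (i : Fin L) :
    swapK k i (cycSucc i) = k i := by
  simp [swapK]

lemma cycSucc_ne_self {L : ℕ} (hL : 2 ≤ L) (i : Fin L) : cycSucc i ≠ i := by
  intro h
  have h' : ((i : ℕ) + 1) % L = i := congrArg Fin.val h
  rcases Nat.lt_or_ge ((i : ℕ) + 1) L with hlt | hge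
  · rw [Nat.mod_eq_of_lt hlt] at h'; omega
  · rw [show (i : ℕ) + 1 = L by omega, Nat.mod_self] at h'; omega

lemma sign_trans_swapK {L : ℕ} (hL : 2 ≤ L) (σ k : Equiv.Perm (Fin L)) (i : Fin L) :
    Equiv.Perm.sign (σ.trans (swapK k i)) = -Equiv.Perm.sign (σ.trans k) := by
  change Equiv.Perm.sign (k * Equiv.swap i (cycSucc i) * σ) = -Equiv.Perm.sign (k * σ)
  simp [Equiv.Perm.sign_swap (cycSucc_ne_self hL i).symm]

lemma theta_add_theta_neg (p q : ℝ) {x : ℤ} (hx : x ≠ 0) :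
    theta p q x + theta p q (-x) = p + q := by
  rcases hx.lt_or_gt with h | h
  · simp [theta, h, h.not_gt, add_comm]
  · simp [theta, h, h.not_gt]

lemma sum_HmatMax_mul (p q : ℝ) {L : ℕ} (v : Equiv.Perm (Fin L) → ℝ) (c : Equiv.Perm (Fin L)) :
    ∑ k, HmatMax p q L c k * v k =
      ∑ i, (theta p q ((c (cycSucc i) : ℤ) - c i) * v (swapK c i)
        - theta p q ((c i : ℤ) - c (cycSucc i)) * v c) := by
  simp only [HmatMax, Finset.sum_mul]
  rw [Finset.sum_comm]
  refine Finset.sum_congr rfl fun i _ => ?_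
  simp only [eq_swapK_iff]
  simp only [mul_sub, sub_mul, mul_ite, ite_mul, mul_one, mul_zero, zero_mul,
    Finset.sum_sub_distrib, eq_comm (a := c), Finset.sum_ite_eq', Finset.mem_univ, if_true,
    swapK_apply_self, swapK_apply_cycSucc]

lemma sum_HmatMax_mul_of_antisymm (p q : ℝ) {L : ℕ} (hL : 2 ≤ L)
    {v : Equiv.Perm (Fin L) → ℝ} (hv : ∀ k i, v (swapK k i) = -v k) (c : Equiv.Perm (Fin L)) :
    ∑ k, HmatMax p q L c k * v k = -((L : ℝ) * (p + q) * v c) := by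
  have hbond : ∀ i : Fin L, theta p q ((c (cycSucc i) : ℤ) - c i) * v (swapK c i)
      - theta p q ((c i : ℤ) - c (cycSucc i)) * v c = -((p + q) * v c) := by
    intro i
    have hne : (c i : ℤ) - c (cycSucc i) ≠ 0 := by
      simpa [sub_eq_zero, Fin.val_inj] using (cycSucc_ne_self hL i).symm
    rw [hv, ← theta_add_theta_neg p q hne, neg_sub]
    ring
  rw [sum_HmatMax_mul, Finset.sum_congr rfl fun i _ => hbond i, Finset.sum_neg_distrib,
    Finset.sum_const, Finset.card_univ, Fintype.card_fin, nsmul_eq_mul, mul_assoc]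

/-- The signed reversed vector `∑_k sgn(k) |k_L,…,k₁⟩` is an eigenvector of the
multi-species ASEP Hamiltonian in the maximal sector with eigenvalue `−L(p+q)`:
`(H + L(p+q)) ∑_{k∈S_L} sgn(k) |k_L,…,k₁⟩ = 0`.  (Its coefficient at a
configuration `c` is `sgn(c_L,…,c₁)`.) -/
theorem signed_reversed_vector_eigen (p q : ℝ) (L : ℕ) (hL : 2 ≤ L) :
    ∀ c : Equiv.Perm (Fin L),
      (∑ k : Equiv.Perm (Fin L),
          HmatMax p q L c k * ((Equiv.Perm.sign (Fin.revPerm.trans k) : ℤ) : ℝ))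
        + (L : ℝ) * (p + q) * ((Equiv.Perm.sign (Fin.revPerm.trans c) : ℤ) : ℝ) = 0 := by
  intro c
  have hanti : ∀ (k : Equiv.Perm (Fin L)) i,
      ((Equiv.Perm.sign (Fin.revPerm.trans (swapK k i)) : ℤ) : ℝ)
        = -((Equiv.Perm.sign (Fin.revPerm.trans k) : ℤ) : ℝ) := fun k i => by
    rw [sign_trans_swapK hL, Units.val_neg, Int.cast_neg]
  rw [sum_HmatMax_mul_of_antisymm p q hL hanti, neg_add_cancel]
end
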